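/- Optimality of the soft fixed point: let Q* be the unique fixed point of the soft Bellman operator 𝒯. Then for every conditional policy π and every opponent model ρ, the unique fixed point Q_{π,ρ} of the policy-evaluation operator 𝒯_{π,ρ} satisfies Q_{π,ρ}(s,a,b) ≤ Q*(s,a,b) for all (s,a,b). -/

import Mathlib

/-!
By the Gibbs variational principle, applied once over the agent's actions (temperature `α`) and
once over the opponent's actions (prior `P`), the value that `𝒯_{π,ρ}` backs up at a state,
namely the `(π, ρ)`-average of `Q` minus the entropy and KL penalties, never exceeds the
log-sum-exp value backed up by `𝒯`. Hence `𝒯_{π,ρ} Q₁ - 𝒯 Q₂ ≤ γ · max (Q₁ - Q₂)`, and at the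
fixed points the maximum `m` of `Q_{π,ρ} - Q*` satisfies `m ≤ γ m`, so `m ≤ 0`.
-/

/-- The soft Bellman operator
(𝒯Q)(s,a,b) = R(s,a,b) + γ·∑_{s'} p(s,a,b,s')·log ∑_{b'} P(s',b')·(∑_{a'} exp(Q(s',a',b')/α))^α. -/
noncomputable def softBellman {S A B : Type*} [Fintype S] [Fintype A] [Fintype B]
    (α γ : ℝ) (R : S × A × B → ℝ) (p : S → A → B → S → ℝ) (P : S → B → ℝ)
    (Q : S × A × B → ℝ) : S × A × B → ℝ :=
  fun x => R x + γ * ∑ s', p x.1 x.2.1 x.2.2 s' *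
    Real.log (∑ b', P s' b' * (∑ a', Real.exp (Q (s', a', b') / α)) ^ α)

/-- The policy-evaluation operator
(𝒯_{π,ρ}Q)(s,a,b) = R(s,a,b) + γ·∑_{s'} p(s,a,b,s')·( ∑_{b'} ρ(s',b')·( ∑_{a'}
π(s',b',a')·(Q(s',a',b') − α·log π(s',b',a')) ) − ∑_{b'} ρ(s',b')·log(ρ(s',b')/P(s',b')) ). -/
noncomputable def evalOp {S A B : Type*} [Fintype S] [Fintype A] [Fintype B]
    (α γ : ℝ) (R : S × A × B → ℝ) (p : S → A → B → S → ℝ) (P : S → B → ℝ)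
    (π : S → B → A → ℝ) (ρ : S → B → ℝ)
    (Q : S × A × B → ℝ) : S × A × B → ℝ :=
  fun x => R x + γ * ∑ s', p x.1 x.2.1 x.2.2 s' *
    ((∑ b', ρ s' b' *
        (∑ a', π s' b' a' * (Q (s', a', b') - α * Real.log (π s' b' a'))))
      - ∑ b', ρ s' b' * Real.log (ρ s' b' / P s' b'))

open Finset
open Real (log exp log_div log_mul log_exp exp_pos rpow_def_of_pos log_le_sub_one_of_pos)

lemma sum_mul_le_of_forall_le {ι : Type*} [Fintype ι] {w f : ι → ℝ} {M : ℝ}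
    (hw : ∀ i, 0 ≤ w i) (hw1 : ∑ i, w i = 1) (hf : ∀ i, f i ≤ M) :
    ∑ i, w i * f i ≤ M :=
  calc ∑ i, w i * f i ≤ ∑ i, w i * M :=
        sum_le_sum fun i _ => mul_le_mul_of_nonneg_left (hf i) (hw i)
    _ = M := by rw [← sum_mul, hw1, one_mul]

lemma mul_log_div_eq_mul_sub (x : ℝ) {y : ℝ} (hy : y ≠ 0) :
    x * log (x / y) = x * (log x - log y) := by
  rcases eq_or_ne x 0 with rfl | hx
  · simp
  · rw [log_div hx hy]

/-- Gibbs variational inequality, the `≥` half of `log ∑ cᵢ = max_w ∑ wᵢ (log cᵢ - log wᵢ)`. -/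
lemma sum_mul_log_sub_log_le_log_sum {ι : Type*} [Fintype ι] (w c : ι → ℝ)
    (hw : ∀ i, 0 ≤ w i) (hw1 : ∑ i, w i = 1) (hc : ∀ i, 0 < c i) :
    ∑ i, w i * (log (c i) - log (w i)) ≤ log (∑ i, c i) := by
  obtain ⟨i₀, -, -⟩ := exists_ne_zero_of_sum_ne_zero (hw1.symm ▸ one_ne_zero : ∑ i, w i ≠ 0)
  set T := ∑ i, c i
  have hT : 0 < T := sum_pos (fun i _ => hc i) ⟨i₀, mem_univ _⟩
  -- termwise `log t ≤ t - 1` with `t = cᵢ / (wᵢ T)`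
  have hterm : ∀ i, w i * (log (c i) - log (w i)) ≤ c i / T - w i + w i * log T := by
    intro i
    rcases (hw i).eq_or_lt with h0 | hpos
    · rw [← h0]
      simpa using div_nonneg (hc i).le hT.le
    · have key := log_le_sub_one_of_pos (div_pos (hc i) (mul_pos hpos hT))
      rw [log_div (hc i).ne' (mul_pos hpos hT).ne', log_mul hpos.ne' hT.ne'] at key
      have h := mul_le_mul_of_nonneg_left key hpos.le
      have hrhs : w i * (c i / (w i * T) - 1) = c i / T - w i := by field_simp
      linarith
  calc ∑ i, w i * (log (c i) - log (w i))
      ≤ ∑ i, (c i / T - w i + w i * log T) := sum_le_sum fun i _ => hterm i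
    _ = log T := by
      rw [sum_add_distrib, sum_sub_distrib, ← sum_div, div_self hT.ne', hw1, ← sum_mul, hw1]
      ring

section SingleState

variable {A B : Type*} [Fintype A] [Fintype B]

-- The per-state values backed up by `softBellman` and `evalOp`.
noncomputable def softValue (α : ℝ) (P : B → ℝ) (q : A → B → ℝ) : ℝ :=
  log (∑ b, P b * (∑ a, exp (q a b / α)) ^ α)

noncomputable def evalValue (α : ℝ) (P : B → ℝ) (π : B → A → ℝ) (ρ : B → ℝ) (q : A → B → ℝ) :
    ℝ :=
  (∑ b, ρ b * ∑ a, π b a * (q a b - α * log (π b a))) - ∑ b, ρ b * log (ρ b / P b)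

lemma evalValue_le_add {α M : ℝ} {P : B → ℝ} {π : B → A → ℝ} {ρ : B → ℝ} {q₁ q₂ : A → B → ℝ}
    (hπ : ∀ b a, 0 ≤ π b a) (hπ1 : ∀ b, ∑ a, π b a = 1)
    (hρ : ∀ b, 0 ≤ ρ b) (hρ1 : ∑ b, ρ b = 1) (hq : ∀ a b, q₁ a b - q₂ a b ≤ M) :
    evalValue α P π ρ q₁ ≤ evalValue α P π ρ q₂ + M := by
  have hdiff : evalValue α P π ρ q₁ - evalValue α P π ρ q₂ =
      ∑ b, ρ b * ∑ a, π b a * (q₁ a b - q₂ a b) := by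
    simp only [evalValue, mul_sub, sum_sub_distrib]
    ring
  have := sum_mul_le_of_forall_le hρ hρ1 fun b =>
    sum_mul_le_of_forall_le (hπ b) (hπ1 b) fun a => hq a b
  linarith

lemma evalValue_le_softValue [Nonempty A] {α : ℝ} (hα : 0 < α) {P : B → ℝ} (hP : ∀ b, 0 < P b)
    {π : B → A → ℝ} (hπ : ∀ b a, 0 ≤ π b a) (hπ1 : ∀ b, ∑ a, π b a = 1)
    {ρ : B → ℝ} (hρ : ∀ b, 0 ≤ ρ b) (hρ1 : ∑ b, ρ b = 1) (q : A → B → ℝ) :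
    evalValue α P π ρ q ≤ softValue α P q := by
  set V : B → ℝ := fun b => α * log (∑ a, exp (q a b / α))
  have hπV : ∀ b, ∑ a, π b a * (q a b - α * log (π b a)) ≤ V b := by
    intro b
    have gibbs := sum_mul_log_sub_log_le_log_sum (π b) (fun a => exp (q a b / α))
      (hπ b) (hπ1 b) fun a => exp_pos _
    simp only [log_exp] at gibbs
    calc ∑ a, π b a * (q a b - α * log (π b a))
        = α * ∑ a, π b a * (q a b / α - log (π b a)) := by
          rw [mul_sum]
          refine sum_congr rfl fun a _ => ?_
          field_simp
      _ ≤ V b := mul_le_mul_of_nonneg_left gibbs hα.le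
  have hexpV : ∀ b, exp (V b) = (∑ a, exp (q a b / α)) ^ α := fun b => by
    rw [rpow_def_of_pos (sum_pos (fun a _ => exp_pos _) univ_nonempty), mul_comm]
  calc evalValue α P π ρ q
      ≤ ∑ b, ρ b * V b - ∑ b, ρ b * log (ρ b / P b) := by
        unfold evalValue
        gcongr with b
        exacts [hρ b, hπV b]
    _ = ∑ b, ρ b * (log (P b * exp (V b)) - log (ρ b)) := by
        rw [← sum_sub_distrib]
        refine sum_congr rfl fun b _ => ?_
        rw [mul_log_div_eq_mul_sub _ (hP b).ne', log_mul (hP b).ne' (exp_pos _).ne', log_exp]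
        ring
    _ ≤ log (∑ b, P b * exp (V b)) :=
        sum_mul_log_sub_log_le_log_sum ρ _ hρ hρ1 fun b => mul_pos (hP b) (exp_pos _)
    _ = softValue α P q := by simp only [softValue, hexpV]

end SingleState

lemma evalOp_sub_softBellman_le {S A B : Type*} [Fintype S] [Fintype A] [Fintype B] [Nonempty A]
    {α γ M : ℝ} (hα : 0 < α) (hγ : 0 ≤ γ) {R : S × A × B → ℝ} {p : S → A → B → S → ℝ}
    (hp : ∀ s a b s', 0 ≤ p s a b s') (hp1 : ∀ s a b, ∑ s', p s a b s' = 1)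
    {P : S → B → ℝ} (hP : ∀ s b, 0 < P s b)
    {π : S → B → A → ℝ} (hπ : ∀ s b a, 0 ≤ π s b a) (hπ1 : ∀ s b, ∑ a, π s b a = 1)
    {ρ : S → B → ℝ} (hρ : ∀ s b, 0 ≤ ρ s b) (hρ1 : ∀ s, ∑ b, ρ s b = 1)
    {Q₁ Q₂ : S × A × B → ℝ} (hQ : ∀ x, Q₁ x - Q₂ x ≤ M) (x : S × A × B) :
    evalOp α γ R p P π ρ Q₁ x - softBellman α γ R p P Q₂ x ≤ γ * M := by
  have hstate : ∀ s, evalValue α (P s) (π s) (ρ s) (fun a b => Q₁ (s, a, b)) -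
      softValue α (P s) (fun a b => Q₂ (s, a, b)) ≤ M := fun s => by
    have := evalValue_le_add (P := P s) (α := α) (hπ s) (hπ1 s) (hρ s) (hρ1 s)
      fun a b => hQ (s, a, b)
    have := evalValue_le_softValue hα (hP s) (hπ s) (hπ1 s) (hρ s) (hρ1 s)
      fun a b => Q₂ (s, a, b)
    linarith
  have hsum := sum_mul_le_of_forall_le (hp x.1 x.2.1 x.2.2) (hp1 x.1 x.2.1 x.2.2) hstate
  have hsplit : evalOp α γ R p P π ρ Q₁ x - softBellman α γ R p P Q₂ x =
      γ * ∑ s, p x.1 x.2.1 x.2.2 s * (evalValue α (P s) (π s) (ρ s) (fun a b => Q₁ (s, a, b)) -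
        softValue α (P s) (fun a b => Q₂ (s, a, b))) := by
    simp only [evalOp, softBellman, evalValue, softValue, mul_sub, sum_sub_distrib]
    ring
  rw [hsplit]
  exact mul_le_mul_of_nonneg_left hsum hγ

lemma le_of_forall_sub_le_imp_sub_le_mul {X : Type*} [Finite X] {f g : X → ℝ} {γ : ℝ}
    (hγ : γ < 1) (h : ∀ M, (∀ x, f x - g x ≤ M) → ∀ x, f x - g x ≤ γ * M) : f ≤ g := by
  intro x
  have : Nonempty X := ⟨x⟩
  obtain ⟨x₀, hx₀⟩ := Finite.exists_max fun x => f x - g x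
  have hmax := h _ hx₀ x₀
  have : f x₀ - g x₀ ≤ 0 := by nlinarith
  linarith [hx₀ x]

theorem soft_fixed_point_optimality_general
    {S A B : Type*} [Fintype S] [Fintype A] [Fintype B]
    (α γ : ℝ) (hα : 0 < α) (hγ₀ : 0 ≤ γ) (hγ₁ : γ < 1)
    (R : S × A × B → ℝ)
    (p : S → A → B → S → ℝ)
    (hp_nonneg : ∀ s a b s', 0 ≤ p s a b s') (hp_sum : ∀ s a b, ∑ s', p s a b s' = 1)
    (P : S → B → ℝ) (hP_pos : ∀ s b, 0 < P s b)
    (Qstar : S × A × B → ℝ) (hQstar : softBellman α γ R p P Qstar = Qstar)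
    (π : S → B → A → ℝ)
    (hπ_nonneg : ∀ s b a, 0 ≤ π s b a) (hπ_sum : ∀ s b, ∑ a, π s b a = 1)
    (ρ : S → B → ℝ)
    (hρ_nonneg : ∀ s b, 0 ≤ ρ s b) (hρ_sum : ∀ s, ∑ b, ρ s b = 1)
    (Qpr : S × A × B → ℝ) (hQpr : evalOp α γ R p P π ρ Qpr = Qpr) :
    ∀ x : S × A × B, Qpr x ≤ Qstar x := by
  intro x
  have : Nonempty A := ⟨x.2.1⟩
  refine le_of_forall_sub_le_imp_sub_le_mul hγ₁ (fun M hM y => ?_) x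
  have := evalOp_sub_softBellman_le (R := R) hα hγ₀ hp_nonneg hp_sum hP_pos hπ_nonneg hπ_sum
    hρ_nonneg hρ_sum hM y
  rwa [hQpr, hQstar] at this

/-- Optimality of the soft fixed point: if Q* is the fixed point of
the soft Bellman operator 𝒯, then for every conditional policy π and every opponent
model ρ, the fixed point Q_{π,ρ} of 𝒯_{π,ρ} satisfies Q_{π,ρ} ≤ Q* pointwise. -/
theorem soft_fixed_point_optimality
    {S A B : Type*} [Fintype S] [Fintype A] [Fintype B]
    [Nonempty S] [Nonempty A] [Nonempty B]
    (α γ : ℝ) (hα : 0 < α) (hγ₀ : 0 ≤ γ) (hγ₁ : γ < 1)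
    (R : S × A × B → ℝ)
    (p : S → A → B → S → ℝ)
    (hp_nonneg : ∀ s a b s', 0 ≤ p s a b s') (hp_sum : ∀ s a b, ∑ s', p s a b s' = 1)
    (P : S → B → ℝ) (hP_pos : ∀ s b, 0 < P s b) (hP_sum : ∀ s, ∑ b, P s b = 1)
    (Qstar : S × A × B → ℝ) (hQstar : softBellman α γ R p P Qstar = Qstar)
    (π : S → B → A → ℝ)
    (hπ_nonneg : ∀ s b a, 0 ≤ π s b a) (hπ_sum : ∀ s b, ∑ a, π s b a = 1)
    (ρ : S → B → ℝ)
    (hρ_nonneg : ∀ s b, 0 ≤ ρ s b) (hρ_sum : ∀ s, ∑ b, ρ s b = 1)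
    (Qpr : S × A × B → ℝ) (hQpr : evalOp α γ R p P π ρ Qpr = Qpr) :
    ∀ x : S × A × B, Qpr x ≤ Qstar x :=
  soft_fixed_point_optimality_general α γ hα hγ₀ hγ₁ R p hp_nonneg hp_sum P hP_pos Qstar hQstar π
    hπ_nonneg hπ_sum ρ hρ_nonneg hρ_sum Qpr hQpr
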